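/- Let p₁,…,p_n be probability mass functions on a finite set 𝒴. Then the minimum of H(E) over all finitely-valued random variables E together with functions g₁,…,g_n such that each g_i(E) has distribution p_i, equals the minimum of the joint Shannon entropy H(r) over all couplings r, i.e., over all probability mass functions r on 𝒴ⁿ whose i-th marginal is p_i for every i. In particular both minima are attained, and an optimal E can be taken to be a random variable distributed according to an optimal coupling r, with g_i the i-th coordinate projection. -/
import Mathlib

/-- Shannon entropy of a probability vector on a finite type. -/
noncomputable def shannon {α : Type*} [Fintype α] (p : α → ℝ) : ℝ :=
  ∑ x, Real.negMulLog (p x)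

lemma negMulLog_sum_le {α : Type*} (s : Finset α) (f : α → ℝ) (hf : ∀ a ∈ s, 0 ≤ f a) :
    Real.negMulLog (∑ a ∈ s, f a) ≤ ∑ a ∈ s, Real.negMulLog (f a) := by
  have hS : Real.negMulLog (∑ a ∈ s, f a) = ∑ a ∈ s, (-f a * Real.log (∑ b ∈ s, f b)) := by
    rw [Real.negMulLog, ← Finset.sum_neg_distrib, Finset.sum_mul]
  rw [hS]
  refine Finset.sum_le_sum fun a ha => ?_
  rcases eq_or_lt_of_le (hf a ha) with h0 | h0
  · simp [Real.negMulLog, ← h0]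
  · have hle : f a ≤ ∑ b ∈ s, f b := Finset.single_le_sum hf ha
    have := Real.log_le_log h0 hle
    rw [Real.negMulLog, neg_mul, neg_mul, neg_le_neg_iff]
    exact mul_le_mul_of_nonneg_left this (le_of_lt h0)

lemma shannon_pushforward_le {α β : Type*} [Fintype α] [Fintype β] [DecidableEq β]
    (v : α → β) (q : α → ℝ) (hq : ∀ a, 0 ≤ q a) :
    shannon (fun b => ∑ a, if v a = b then q a else 0) ≤ shannon q := by
  have key : shannon q = ∑ b : β, ∑ a : α, (if v a = b then Real.negMulLog (q a) else 0) := by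
    rw [Finset.sum_comm]
    simp [shannon, Finset.sum_ite_eq]
  rw [key, shannon]
  refine Finset.sum_le_sum fun b _ => ?_
  have h2 : ∀ a : α, (if v a = b then Real.negMulLog (q a) else 0)
      = Real.negMulLog (if v a = b then q a else 0) := by
    intro a; by_cases h : v a = b <;> simp [h]
  rw [Finset.sum_congr rfl fun a _ => h2 a]
  exact negMulLog_sum_le _ _ (fun a _ => by by_cases h : v a = b <;> simp [h, hq a])

lemma exists_min_coupling {𝒴 : Type} [Fintype 𝒴] [DecidableEq 𝒴] (n : ℕ)
    (p : Fin n → 𝒴 → ℝ) (hp0 : ∀ i y, 0 ≤ p i y) (hp1 : ∀ i, ∑ y, p i y = 1) :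
    ∃ r : (Fin n → 𝒴) → ℝ,
      ((∀ ω, 0 ≤ r ω) ∧ (∑ ω, r ω) = 1 ∧
        ∀ i y, (∑ ω, if ω i = y then r ω else 0) = p i y) ∧
      ∀ r' : (Fin n → 𝒴) → ℝ,
        ((∀ ω, 0 ≤ r' ω) ∧ (∑ ω, r' ω) = 1 ∧
          ∀ i y, (∑ ω, if ω i = y then r' ω else 0) = p i y) →
        shannon r ≤ shannon r' := by
  classical
  set K : Set ((Fin n → 𝒴) → ℝ) :=
    {r | (∀ ω, 0 ≤ r ω) ∧ (∑ ω, r ω) = 1 ∧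
      ∀ i y, (∑ ω, if ω i = y then r ω else 0) = p i y} with hKdef
  have hne : (fun ω : Fin n → 𝒴 => ∏ i, p i (ω i)) ∈ K := by
    refine ⟨fun ω => Finset.prod_nonneg fun i _ => hp0 i (ω i), ?_, ?_⟩
    · rw [← Fintype.prod_sum (fun i (y : 𝒴) => p i y)]
      simp [hp1]
    · intro i y
      have hterm : ∀ ω : Fin n → 𝒴,
          (if ω i = y then ∏ j, p j (ω j) else 0)
            = ∏ j, (if j = i then (if ω j = y then p j (ω j) else 0) else p j (ω j)) := by
        intro ω
        by_cases h : ω i = y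
        · rw [if_pos h]
          refine Finset.prod_congr rfl fun j _ => ?_
          by_cases hj : j = i
          · subst hj; simp [h]
          · simp [hj]
        · rw [if_neg h]
          refine (Finset.prod_eq_zero (Finset.mem_univ i) ?_).symm
          simp [h]
      rw [Finset.sum_congr rfl fun ω _ => hterm ω,
        ← Fintype.prod_sum (fun j (z : 𝒴) => if j = i then (if z = y then p j z else 0) else p j z)]
      rw [Finset.prod_eq_single i (fun j _ hj => by simp [hj, hp1 j]) (by simp)]
      simp [Finset.sum_ite_eq' Finset.univ y (p i)]
  have hsub : K ⊆ Set.univ.pi fun _ : Fin n → 𝒴 => Set.Icc (0:ℝ) 1 := by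
    intro r hr ω _
    exact ⟨hr.1 ω, by
      rw [← hr.2.1]
      exact Finset.single_le_sum (fun ω' _ => hr.1 ω') (Finset.mem_univ ω)⟩
  have hclosed : IsClosed K := by
    have h1 : IsClosed {r : (Fin n → 𝒴) → ℝ | ∀ ω, 0 ≤ r ω} := by
      have : {r : (Fin n → 𝒴) → ℝ | ∀ ω, 0 ≤ r ω} = ⋂ ω, {r | 0 ≤ r ω} := by
        ext r; simp
      rw [this]
      exact isClosed_iInter fun ω => isClosed_le continuous_const (continuous_apply ω)
    have h2 : IsClosed {r : (Fin n → 𝒴) → ℝ | (∑ ω, r ω) = 1} :=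
      isClosed_eq (by fun_prop) continuous_const
    have h3 : IsClosed {r : (Fin n → 𝒴) → ℝ |
        ∀ i y, (∑ ω, if ω i = y then r ω else 0) = p i y} := by
      have : {r : (Fin n → 𝒴) → ℝ | ∀ i y, (∑ ω, if ω i = y then r ω else 0) = p i y}
          = ⋂ i, ⋂ y, {r | (∑ ω, if ω i = y then r ω else 0) = p i y} := by
        ext r; simp
      rw [this]
      refine isClosed_iInter fun i => isClosed_iInter fun y => isClosed_eq ?_ continuous_const
      refine continuous_finset_sum _ fun ω _ => ?_
      by_cases h : ω i = y
      · simpa [h] using continuous_apply ω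
      · simp only [h, if_false]; exact continuous_const
    have : K = {r : (Fin n → 𝒴) → ℝ | ∀ ω, 0 ≤ r ω} ∩
        ({r | (∑ ω, r ω) = 1} ∩ {r | ∀ i y, (∑ ω, if ω i = y then r ω else 0) = p i y}) := by
      ext r; simp [hKdef]
    rw [this]
    exact h1.inter (h2.inter h3)
  have hcompact : IsCompact K :=
    IsCompact.of_isClosed_subset (isCompact_univ_pi fun _ => isCompact_Icc) hclosed hsub
  have hcont : Continuous (shannon : ((Fin n → 𝒴) → ℝ) → ℝ) := by
    unfold shannon
    exact continuous_finset_sum _ fun x _ => Real.continuous_negMulLog.comp (continuous_apply x)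
  obtain ⟨r, hrK, hrmin⟩ := hcompact.exists_isMinOn ⟨_, hne⟩ hcont.continuousOn
  exact ⟨r, hrK, fun r' hr' => hrmin hr'⟩

/-- the minimum of H(E) over all finitely-valued random variables E
together with functions g₁,…,g_n such that g_i(E) has distribution p_i equals the
minimum of the joint entropy H(r) over all couplings r of p₁,…,p_n; both minima
are attained, and an optimal E can be taken distributed according to an optimal
coupling r with the coordinate projections as the g_i. -/
theorem stmt12 {𝒴 : Type} [Fintype 𝒴] [DecidableEq 𝒴] (n : ℕ)
    (p : Fin n → 𝒴 → ℝ)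
    (hp0 : ∀ i y, 0 ≤ p i y) (hp1 : ∀ i, ∑ y, p i y = 1) :
    ∃ s : ℝ,
      IsLeast {h : ℝ | ∃ (k : ℕ) (q : Fin k → ℝ) (g : Fin n → Fin k → 𝒴),
          (∀ e, 0 ≤ q e) ∧ (∑ e, q e) = 1 ∧
          (∀ i y, (∑ e, if g i e = y then q e else 0) = p i y) ∧
          h = shannon q} s ∧
      IsLeast {h : ℝ | ∃ r : (Fin n → 𝒴) → ℝ,
          (∀ ω, 0 ≤ r ω) ∧ (∑ ω, r ω) = 1 ∧
          (∀ i y, (∑ ω, if ω i = y then r ω else 0) = p i y) ∧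
          h = shannon r} s ∧
      ∃ r : (Fin n → 𝒴) → ℝ,
        (∀ ω, 0 ≤ r ω) ∧ (∑ ω, r ω) = 1 ∧
        (∀ i y, (∑ ω, if ω i = y then r ω else 0) = p i y) ∧
        shannon r = s ∧
        (∀ i y, (∑ ω, if (fun ω' : Fin n → 𝒴 => ω' i) ω = y then r ω else 0)
          = p i y) := by
  classical
  obtain ⟨r, ⟨hr0, hr1, hrm⟩, hrmin⟩ := exists_min_coupling n p hp0 hp1
  refine ⟨shannon r, ⟨?_, ?_⟩, ⟨⟨r, hr0, hr1, hrm, rfl⟩, ?_⟩, r, hr0, hr1, hrm, rfl,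
    fun i y => hrm i y⟩
  · -- membership in the random-variable set
    refine ⟨Fintype.card (Fin n → 𝒴), r ∘ (Fintype.equivFin (Fin n → 𝒴)).symm,
      fun i a => (Fintype.equivFin (Fin n → 𝒴)).symm a i, ?_, ?_, ?_, ?_⟩
    · intro e; exact hr0 _
    · rw [← hr1]
      exact Fintype.sum_equiv (Fintype.equivFin (Fin n → 𝒴)).symm _ _ fun a => rfl
    · intro i y
      rw [← hrm i y]
      exact Fintype.sum_equiv (Fintype.equivFin (Fin n → 𝒴)).symm _ _ fun a => rfl
    · unfold shannon
      exact (Fintype.sum_equiv (Fintype.equivFin (Fin n → 𝒴)).symm _ _ fun a => rfl).symm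
  · -- lower bound for the random-variable set
    rintro h ⟨k, q, g, hq0, hq1, hqm, rfl⟩
    set v : Fin k → (Fin n → 𝒴) := fun a i => g i a with hv
    set r' : (Fin n → 𝒴) → ℝ := fun ω => ∑ a, if v a = ω then q a else 0 with hr'
    have hr'0 : ∀ ω, 0 ≤ r' ω := fun ω =>
      Finset.sum_nonneg fun a _ => by by_cases h : v a = ω <;> simp [h, hq0 a]
    have hr'1 : (∑ ω, r' ω) = 1 := by
      rw [hr', Finset.sum_comm]
      simpa [Finset.sum_ite_eq] using hq1
    have hr'm : ∀ i y, (∑ ω, if ω i = y then r' ω else 0) = p i y := by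
      intro i y
      have hω : ∀ ω : Fin n → 𝒴, (if ω i = y then r' ω else 0)
          = ∑ a, if v a = ω then (if g i a = y then q a else 0) else 0 := by
        intro ω
        by_cases h : ω i = y
        · rw [if_pos h, hr']
          refine Finset.sum_congr rfl fun a _ => ?_
          by_cases h2 : v a = ω
          · have hgy : g i a = y := (congrFun h2 i).trans h
            simp [h2, hgy]
          · simp [h2]
        · rw [if_neg h]
          refine (Finset.sum_eq_zero fun a _ => ?_).symm
          by_cases h2 : v a = ω
          · have hgy : g i a ≠ y := fun hh => h ((congrFun h2 i).symm.trans hh)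
            simp [h2, hgy]
          · simp [h2]
      rw [Finset.sum_congr rfl fun ω _ => hω ω, Finset.sum_comm]
      simpa [Finset.sum_ite_eq] using hqm i y
    have h1 : shannon r ≤ shannon r' := hrmin r' ⟨hr'0, hr'1, hr'm⟩
    have h2 : shannon r' ≤ shannon q := shannon_pushforward_le v q hq0
    exact h1.trans h2
  · -- lower bound for the coupling set
    rintro h ⟨r', hr'0, hr'1, hr'm, rfl⟩
    exact hrmin r' ⟨hr'0, hr'1, hr'm⟩
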